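/- Let f1, f2 be homogeneous of degrees d1 ≤ d2 in A[X1,X2] forming a regular sequence, with δ = d1+d2−2, and assume d2−1 ≤ ν ≤ δ (so 0 ≤ δ−ν ≤ d1−1). Then the collection of Sylvester forms (sylv_α(f1,f2))_{|α|=δ−ν} is an A-basis of H^0_m(B)_ν, where B = A[X1,X2]/(f1,f2) and m = (X1,X2). -/

import Mathlib

open MvPolynomial RingTheory.Sequence

/-- `X 0`, `X 1` stand for the paper's `X1`, `X2`, and `s` represents `sylv_{(β1,β2)}(f1,f2)`:
the determinant of a decomposition `f_i = X1^{β1+1} a_{i,1} + X2^{β2+1} a_{i,2}` with `a_{i,j}`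
homogeneous of degree `d_i − β_j − 1`. -/
def isSylv {A : Type*} [CommRing A] (d1 d2 β1 β2 : ℕ)
    (f1 f2 s : MvPolynomial (Fin 2) A) : Prop :=
  ∃ a11 a12 a21 a22 : MvPolynomial (Fin 2) A,
    a11.IsHomogeneous (d1 - β1 - 1) ∧ a12.IsHomogeneous (d1 - β2 - 1) ∧
    a21.IsHomogeneous (d2 - β1 - 1) ∧ a22.IsHomogeneous (d2 - β2 - 1) ∧
    f1 = X 0 ^ (β1 + 1) * a11 + X 1 ^ (β2 + 1) * a12 ∧
    f2 = X 0 ^ (β1 + 1) * a21 + X 1 ^ (β2 + 1) * a22 ∧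
    s = a11 * a22 - a12 * a21

/-!
Let `r = δ − ν`, `B = A[X1,X2]/(f1,f2)`, and let `x`, `y`, `u_j` be the images in `B` of `X1`,
`X2` and `sylv_{(j, r−j)}`. Cramer's rule gives `x u_0 = 0 = y u_r`. As `X1^p, X2^q` is a regular
sequence, decompositions of `(f1, f2)` with the same exponents have determinants congruent
modulo `(f1, f2)`; with exponents `(j+1, r−j)` this gives `x u_{j+1} = y u_j`, hence
`x^j y^{r−j} u_j = y^r u_0 = sylv_{(0,0)} =: τ`.

Because `f1, f2` is regular, the socle `{v | x v = y v = 0}` of `B` is `A τ` (the syzygies of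
`f1, f2` are Koszul), and `τ` is `A`-torsion free (comparing degrees inside `(f1)`). Multiplying
`∑ c_j u_j = 0` by `x^j y^{r−j}` leaves `c_j τ = 0`, whence linear independence. For spanning,
an element `v` of degree `ν + l` killed by `m^k` lies in the span of the `y^l u_j`: by induction
on `k` so do `x v` and `y v` one degree up, and subtracting elements of the span moves `v` into
the socle `A τ`, which sits in degree `δ = ν + r`.
-/

section

variable {σ A : Type*} [CommRing A]

attribute [local instance] MvPolynomial.gradedAlgebra in
theorem MvPolynomial.homogeneousComponent_mul_of_isHomogeneous {f : MvPolynomial σ A} {d : ℕ}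
    (hf : f.IsHomogeneous d) (p : MvPolynomial σ A) (n : ℕ) :
    homogeneousComponent n (p * f) =
      if d ≤ n then homogeneousComponent (n - d) p * f else 0 := by
  classical
  simpa [← decomposition.decompose'_apply] using
    DirectSum.coe_decompose_mul_of_right_mem (homogeneousSubmodule σ A) n hf (a := p)

attribute [local instance] MvPolynomial.gradedAlgebra in
theorem MvPolynomial.homogeneousComponent_mem_span {S : Set (MvPolynomial σ A)}
    (hS : ∀ f ∈ S, ∃ d, f.IsHomogeneous d) {p : MvPolynomial σ A} (hp : p ∈ Ideal.span S)
    (n : ℕ) : homogeneousComponent n p ∈ Ideal.span S :=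
  homogeneousComponent_mem_of_mem (Ideal.homogeneous_span _ _ hS) hp n

theorem MvPolynomial.monomial_one_dvd_iff_le {g : MvPolynomial σ A} {s : σ →₀ ℕ} :
    monomial s (1 : A) ∣ g ↔ ∀ m ∈ g.support, s ≤ m := by
  simpa [Ideal.mem_span_singleton] using mem_ideal_span_monomial_image (x := g) (s := {s})

theorem MvPolynomial.X_pow_dvd_of_dvd_X_pow_mul {i j : σ} (hij : i ≠ j) {p q : ℕ}
    {e : MvPolynomial σ A} (h : X j ^ q ∣ X i ^ p * e) : X j ^ q ∣ e := by
  classical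
  simp only [X_pow_eq_monomial] at h ⊢
  have hi := monomial_one_dvd_iff_le.mp (dvd_mul_right (monomial (Finsupp.single i p) (1 : A)) e)
  have hj := monomial_one_dvd_iff_le.mp h
  obtain ⟨w, hw⟩ : monomial (Finsupp.single i p + Finsupp.single j q) (1 : A) ∣
      monomial (Finsupp.single i p) 1 * e :=
    monomial_one_dvd_iff_le.mpr fun m hm k => by
      have := hi m hm k
      have := hj m hm k
      by_cases hk : k = i
      · subst hk; simp_all
      · simp_all
  refine ⟨w, (isRegular_X_pow (R := A) (n := i) p).left ?_⟩
  simp only [X_pow_eq_monomial, hw, ← mul_assoc, monomial_mul, mul_one]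

theorem MvPolynomial.exists_of_X_pow_mul_add_X_pow_mul_eq_zero {i j : σ} (hij : i ≠ j)
    {p q : ℕ} {e₁ e₂ : MvPolynomial σ A} (h : X i ^ p * e₁ + X j ^ q * e₂ = 0) :
    ∃ w, e₁ = X j ^ q * w ∧ e₂ = -(X i ^ p * w) := by
  obtain ⟨w, hw⟩ := X_pow_dvd_of_dvd_X_pow_mul hij
    (Dvd.intro (-e₂) (by linear_combination -h) : X j ^ q ∣ X i ^ p * e₁)
  refine ⟨w, hw, (isRegular_X_pow (R := A) (n := j) q).left ?_⟩
  simp only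
  linear_combination h - X i ^ p * hw

theorem MvPolynomial.exists_eq_C_add_X_mul_add_X_mul (W : MvPolynomial (Fin 2) A) :
    ∃ (c : A) (W₀ W₁ : MvPolynomial (Fin 2) A), W = C c + X 0 * W₀ + X 1 * W₁ := by
  induction W using MvPolynomial.induction_on with
  | C a => exact ⟨a, 0, 0, by simp⟩
  | add p q hp hq =>
    obtain ⟨c, W₀, W₁, rfl⟩ := hp
    obtain ⟨c', W₀', W₁', rfl⟩ := hq
    exact ⟨c + c', W₀ + W₀', W₁ + W₁', by rw [map_add]; ring⟩
  | mul_X p i _ =>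
    fin_cases i
    · exact ⟨0, p, 0, by simp [mul_comm]⟩
    · exact ⟨0, 0, p, by simp [mul_comm]⟩

end

namespace RingTheory.Sequence.IsWeaklyRegular

variable {R : Type*} [CommRing R] {a b : R}

theorem eq_zero_of_mul_eq_zero (h : IsWeaklyRegular R [a, b]) {x : R} (hx : a * x = 0) :
    x = 0 :=
  ((isWeaklyRegular_cons_iff R a [b]).mp h).1.right_eq_zero_of_smul hx

theorem mem_span_singleton_of_mul_mem (h : IsWeaklyRegular R [a, b]) {x : R}
    (hx : b * x ∈ Ideal.span {a}) : x ∈ Ideal.span {a} := by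
  have hb := ((isWeaklyRegular_cons_iff R a [b]).mp h).2
  rw [isWeaklyRegular_singleton_iff, isSMulRegular_quotient_iff_mem_of_smul_mem,
    ← Submodule.ideal_span_singleton_smul, Ideal.smul_eq_mul, Ideal.mul_top] at hb
  exact hb x hx

theorem exists_eq_mul_of_mul_eq_mul (h : IsWeaklyRegular R [a, b]) {x y : R}
    (hxy : x * a = y * b) : ∃ w, y = w * a ∧ x = w * b := by
  obtain ⟨w, hw⟩ := Ideal.mem_span_singleton'.mp
    (h.mem_span_singleton_of_mul_mem (Ideal.mem_span_singleton'.mpr ⟨x, by rw [hxy, mul_comm]⟩))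
  refine ⟨w, hw.symm, sub_eq_zero.mp (h.eq_zero_of_mul_eq_zero ?_)⟩
  linear_combination hxy - b * hw

end RingTheory.Sequence.IsWeaklyRegular

section

variable {A : Type*} [CommRing A] {f₁ f₂ a₁₁ a₁₂ a₂₁ a₂₂ : MvPolynomial (Fin 2) A} {p q : ℕ}

theorem X_zero_pow_mul_det_mem (h₁ : f₁ = X 0 ^ p * a₁₁ + X 1 ^ q * a₁₂)
    (h₂ : f₂ = X 0 ^ p * a₂₁ + X 1 ^ q * a₂₂) :
    X 0 ^ p * (a₁₁ * a₂₂ - a₁₂ * a₂₁) ∈ Ideal.span {f₁, f₂} :=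
  Ideal.mem_span_pair.mpr ⟨a₂₂, -a₁₂, by rw [h₁, h₂]; ring⟩

theorem X_one_pow_mul_det_mem (h₁ : f₁ = X 0 ^ p * a₁₁ + X 1 ^ q * a₁₂)
    (h₂ : f₂ = X 0 ^ p * a₂₁ + X 1 ^ q * a₂₂) :
    X 1 ^ q * (a₁₁ * a₂₂ - a₁₂ * a₂₁) ∈ Ideal.span {f₁, f₂} :=
  Ideal.mem_span_pair.mpr ⟨-a₂₁, a₁₁, by rw [h₁, h₂]; ring⟩

theorem det_sub_det_mem {b₁₁ b₁₂ b₂₁ b₂₂ : MvPolynomial (Fin 2) A}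
    (h₁ : f₁ = X 0 ^ p * a₁₁ + X 1 ^ q * a₁₂) (h₂ : f₂ = X 0 ^ p * a₂₁ + X 1 ^ q * a₂₂)
    (h₁' : f₁ = X 0 ^ p * b₁₁ + X 1 ^ q * b₁₂) (h₂' : f₂ = X 0 ^ p * b₂₁ + X 1 ^ q * b₂₂) :
    (a₁₁ * a₂₂ - a₁₂ * a₂₁) - (b₁₁ * b₂₂ - b₁₂ * b₂₁) ∈ Ideal.span {f₁, f₂} := by
  obtain ⟨u, hu₁, hu₂⟩ := exists_of_X_pow_mul_add_X_pow_mul_eq_zero (by decide)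
    (by linear_combination h₁' - h₁ : X 0 ^ p * (a₁₁ - b₁₁) + X 1 ^ q * (a₁₂ - b₁₂) = 0)
  obtain ⟨v, hv₁, hv₂⟩ := exists_of_X_pow_mul_add_X_pow_mul_eq_zero (by decide)
    (by linear_combination h₂' - h₂ : X 0 ^ p * (a₂₁ - b₂₁) + X 1 ^ q * (a₂₂ - b₂₂) = 0)
  refine Ideal.mem_span_pair.mpr ⟨-v, u, ?_⟩
  rw [sub_eq_iff_eq_add'] at hu₁ hu₂ hv₁ hv₂
  rw [hu₁, hu₂, hv₁, hv₂, h₁', h₂']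
  ring

variable {b₁₁ b₁₂ b₂₁ b₂₂ : MvPolynomial (Fin 2) A}

theorem exists_sub_C_mul_det_mem (hreg : IsWeaklyRegular (MvPolynomial (Fin 2) A) [f₁, f₂])
    (h₁ : f₁ = X 0 * b₁₁ + X 1 * b₁₂) (h₂ : f₂ = X 0 * b₂₁ + X 1 * b₂₂)
    {H : MvPolynomial (Fin 2) A} (hX₀ : X 0 * H ∈ Ideal.span {f₁, f₂})
    (hX₁ : X 1 * H ∈ Ideal.span {f₁, f₂}) :
    ∃ c : A, H - C c * (b₁₁ * b₂₂ - b₁₂ * b₂₁) ∈ Ideal.span {f₁, f₂} := by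
  -- `X 1 • (U, V) - X 0 • (U', V')` is a syzygy of `(f₁, f₂)`, hence equal to `W • (f₂, -f₁)`
  obtain ⟨U, V, hUV⟩ := Ideal.mem_span_pair.mp hX₀
  obtain ⟨U', V', hUV'⟩ := Ideal.mem_span_pair.mp hX₁
  obtain ⟨W, hW₁, hW₂⟩ := hreg.exists_eq_mul_of_mul_eq_mul
    (by linear_combination X 1 * hUV - X 0 * hUV' :
      (X 1 * U - X 0 * U') * f₁ = (X 0 * V' - X 1 * V) * f₂)
  obtain ⟨c, W₀, W₁, rfl⟩ := exists_eq_C_add_X_mul_add_X_mul W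
  obtain ⟨w₁, -, hw₁⟩ := exists_of_X_pow_mul_add_X_pow_mul_eq_zero (p := 1) (q := 1)
    (by decide) (by linear_combination -hW₂ - C c * h₂ :
      X 0 ^ 1 * (U' + W₀ * f₂ + C c * b₂₁) + X 1 ^ 1 * -(U - W₁ * f₂ - C c * b₂₂) = 0)
  obtain ⟨w₂, -, hw₂⟩ := exists_of_X_pow_mul_add_X_pow_mul_eq_zero (p := 1) (q := 1)
    (by decide) (by linear_combination hW₁ + C c * h₁ :
      X 0 ^ 1 * (V' - W₀ * f₁ - C c * b₁₁) + X 1 ^ 1 * -(V + W₁ * f₁ + C c * b₁₂) = 0)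
  refine ⟨c, Ideal.mem_span_pair.mpr ⟨w₁, w₂, (isRegular_X (n := 0)).left ?_⟩⟩
  linear_combination f₁ * hw₁ + f₂ * hw₂ + hUV - C c * b₂₂ * h₁ + C c * b₁₂ * h₂

theorem eq_zero_of_C_mul_det_mem (hreg : IsWeaklyRegular (MvPolynomial (Fin 2) A) [f₁, f₂])
    {n : ℕ} (hb₁₁ : b₁₁.IsHomogeneous n) (hb₁₂ : b₁₂.IsHomogeneous n)
    (h₁ : f₁ = X 0 * b₁₁ + X 1 * b₁₂) (h₂ : f₂ = X 0 * b₂₁ + X 1 * b₂₂) {c : A}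
    (hc : C c * (b₁₁ * b₂₂ - b₁₂ * b₂₁) ∈ Ideal.span {f₁, f₂}) : c = 0 := by
  -- `c b₁₂ + X 0 V` and `c b₁₁ - X 1 V` lie in `(f₁)`, so their degree `n` parts vanish:
  -- `c b₁₂ = -X 0 v` and `c b₁₁ = X 1 v`, whence `c f₁ = 0`
  obtain ⟨U, V, hUV⟩ := Ideal.mem_span_pair.mp hc
  have hf₁ : f₁.IsHomogeneous (n + 1) := by
    rw [h₁, add_comm n]
    exact ((isHomogeneous_X A 0).mul hb₁₁).add ((isHomogeneous_X A 1).mul hb₁₂)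
  obtain ⟨W₁, hW₁⟩ := Ideal.mem_span_singleton'.mp (hreg.mem_span_singleton_of_mul_mem
    (x := C c * b₁₂ + X 0 * V) (Ideal.mem_span_singleton'.mpr ⟨C c * b₂₂ - X 0 * U,
      by linear_combination -X 0 * hUV + C c * b₂₂ * h₁ - C c * b₁₂ * h₂⟩))
  obtain ⟨W₂, hW₂⟩ := Ideal.mem_span_singleton'.mp (hreg.mem_span_singleton_of_mul_mem
    (x := C c * b₁₁ - X 1 * V) (Ideal.mem_span_singleton'.mpr ⟨C c * b₂₁ + X 1 * U,
      by linear_combination X 1 * hUV + C c * b₂₁ * h₁ - C c * b₁₁ * h₂⟩))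
  have hlow : ∀ W, homogeneousComponent n (W * f₁) = 0 := fun W => by
    simp [homogeneousComponent_mul_of_isHomogeneous hf₁]
  obtain ⟨v, hv⟩ : ∃ v, ∀ i, homogeneousComponent n (X i * V) = X i * v :=
    ⟨if 1 ≤ n then homogeneousComponent (n - 1) V else 0, fun i => by
      rw [mul_comm, homogeneousComponent_mul_of_isHomogeneous (isHomogeneous_X A i)]
      split_ifs <;> simp [mul_comm]⟩
  have e₁ := congrArg (homogeneousComponent n) hW₁
  have e₂ := congrArg (homogeneousComponent n) hW₂
  simp only [hlow, map_add, map_sub, homogeneousComponent_C_mul, hv,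
    homogeneousComponent_eq_self hb₁₁, homogeneousComponent_eq_self hb₁₂] at e₁ e₂
  have hCc : f₁ * C c = 0 := by
    linear_combination C c * h₁ - X 0 * e₂ - X 1 * e₁
  simpa using hreg.eq_zero_of_mul_eq_zero hCc

end

section

variable {σ A : Type*} [CommRing A] {I : Ideal (MvPolynomial σ A)}

theorem Ideal.Quotient.mk_C_mul (c : A) (p : MvPolynomial σ A) :
    Ideal.Quotient.mk I (C c * p) = c • Ideal.Quotient.mk I p := by
  rw [C_mul']
  rfl

variable (I) in
noncomputable def quotHomogeneousSubmodule (n : ℕ) : Submodule A (MvPolynomial σ A ⧸ I) :=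
  (homogeneousSubmodule σ A n).map (Ideal.Quotient.mkₐ A I).toLinearMap

theorem mk_mem_quotHomogeneousSubmodule {p : MvPolynomial σ A} {n : ℕ}
    (hp : p.IsHomogeneous n) : Ideal.Quotient.mk I p ∈ quotHomogeneousSubmodule I n :=
  ⟨p, hp, rfl⟩

theorem mk_mul_mem_quotHomogeneousSubmodule {p : MvPolynomial σ A} {m n : ℕ}
    (hp : p.IsHomogeneous m) {v : MvPolynomial σ A ⧸ I}
    (hv : v ∈ quotHomogeneousSubmodule I n) :
    Ideal.Quotient.mk I p * v ∈ quotHomogeneousSubmodule I (n + m) := by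
  obtain ⟨q, hq, rfl⟩ := hv
  exact ⟨p * q, add_comm m n ▸ hp.mul hq, by simp⟩

theorem eq_zero_of_mem_quotHomogeneousSubmodule
    (hI : ∀ p ∈ I, ∀ n, homogeneousComponent n p ∈ I)
    {v : MvPolynomial σ A ⧸ I} {m n : ℕ} (hm : v ∈ quotHomogeneousSubmodule I m)
    (hn : v ∈ quotHomogeneousSubmodule I n) (hmn : m ≠ n) : v = 0 := by
  obtain ⟨p, hp, rfl⟩ := hm
  obtain ⟨q, hq, hqp⟩ := hn
  have := hI (p - q) (Ideal.Quotient.eq.mp (by simpa using hqp.symm)) m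
  rw [map_sub, homogeneousComponent_eq_self hp, homogeneousComponent_of_mem hq, if_neg hmn,
    sub_zero] at this
  simpa [Ideal.Quotient.eq_zero_iff_mem] using this

theorem mk_X_pow_mul_X_pow_mul_eq_zero {G : MvPolynomial (Fin 2) A}
    {I : Ideal (MvPolynomial (Fin 2) A)} {k : ℕ}
    (hk : ∀ g ∈ Ideal.span {(X 0 : MvPolynomial (Fin 2) A), X 1} ^ k, g * G ∈ I)
    {a b : ℕ} (hab : a + b = k) :
    Ideal.Quotient.mk I (X 0) ^ a * Ideal.Quotient.mk I (X 1) ^ b * Ideal.Quotient.mk I G = 0 := by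
  rw [← map_pow, ← map_pow, ← map_mul, ← map_mul, Ideal.Quotient.eq_zero_iff_mem]
  refine hk _ ?_
  rw [← hab, pow_add]
  exact Ideal.mul_mem_mul (Ideal.pow_mem_pow (Ideal.subset_span (by simp)) a)
    (Ideal.pow_mem_pow (Ideal.subset_span (by simp)) b)

end

structure IsSylvesterChain {B : Type*} [CommRing B] (x y : B) (r : ℕ) (u : ℕ → B) : Prop where
  x_mul_first : x * u 0 = 0
  y_mul_last : y * u r = 0
  x_mul_succ : ∀ j < r, x * u (j + 1) = y * u j

def chainSpan (A : Type*) {B : Type*} [CommRing A] [CommRing B] [Algebra A B] (y : B) (r : ℕ)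
    (u : ℕ → B) (l : ℕ) : Submodule A B :=
  Submodule.span A ((fun j => y ^ l * u j) '' ↑(Finset.range (r + 1)))

theorem chainSpan_le {A B : Type*} [CommRing A] [CommRing B] [Algebra A B] {y : B} {r : ℕ}
    {u : ℕ → B} {D : ℕ → Submodule A B} (hyD : ∀ {n v}, v ∈ D n → y * v ∈ D (n + 1)) {ν : ℕ}
    (hu : ∀ j ≤ r, u j ∈ D ν) (l : ℕ) : chainSpan A y r u l ≤ D (ν + l) := by
  refine Submodule.span_le.mpr ?_
  rintro _ ⟨j, hj, rfl⟩
  induction l with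
  | zero => simpa using hu j (by simpa [Nat.lt_succ_iff] using hj)
  | succ l ih => simpa [pow_succ', mul_assoc, ← add_assoc] using hyD ih

namespace IsSylvesterChain

variable {B : Type*} [CommRing B] {x y : B} {r : ℕ} {u : ℕ → B}

theorem x_pow_mul (hc : IsSylvesterChain x y r u) {a j : ℕ} (hj : j ≤ r) (ha : a ≤ j) :
    x ^ a * u j = y ^ a * u (j - a) := by
  induction a with
  | zero => simp
  | succ a ih =>
    rw [show j - a = j - (a + 1) + 1 by omega] at ih
    rw [pow_succ', mul_assoc, ih (by omega), mul_left_comm, hc.x_mul_succ _ (by omega)]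
    ring

theorem y_pow_mul (hc : IsSylvesterChain x y r u) {b j : ℕ} (hjb : j + b ≤ r) :
    y ^ b * u j = x ^ b * u (j + b) := by
  induction b with
  | zero => simp
  | succ b ih =>
    rw [pow_succ', mul_assoc, ih (by omega), mul_left_comm, ← hc.x_mul_succ (j + b) (by omega),
      ← add_assoc]
    ring

theorem x_pow_mul_eq_zero (hc : IsSylvesterChain x y r u) {a j : ℕ} (hj : j ≤ r)
    (ha : j < a) : x ^ a * u j = 0 := by
  obtain ⟨a, rfl⟩ := Nat.exists_eq_add_of_lt ha
  rw [show j + a + 1 = (a + 1) + j by omega, pow_add, mul_assoc, hc.x_pow_mul hj le_rfl,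
    Nat.sub_self, mul_left_comm, pow_succ, mul_assoc, hc.x_mul_first]
  simp

theorem y_pow_mul_eq_zero (hc : IsSylvesterChain x y r u) {b j : ℕ} (hj : j ≤ r)
    (hb : r < j + b) : y ^ b * u j = 0 := by
  have h : y ^ b = y ^ (b - (r - j) - 1) * y * y ^ (r - j) := by
    rw [← pow_succ, ← pow_add]; congr 1; omega
  rw [h, mul_assoc, hc.y_pow_mul (by omega), show j + (r - j) = r by omega, mul_left_comm,
    mul_assoc, hc.y_mul_last]
  simp

theorem x_mul_top (hc : IsSylvesterChain x y r u) (l : ℕ) :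
    x * (y ^ l * u (r - l)) = y ^ (l + 1) * u (r - (l + 1)) := by
  rcases lt_or_ge l r with hl | hl
  · rw [mul_left_comm, show r - l = r - (l + 1) + 1 by omega, hc.x_mul_succ _ (by omega),
      pow_succ]
    ring
  · rw [Nat.sub_eq_zero_of_le hl, Nat.sub_eq_zero_of_le (by omega), mul_left_comm,
      hc.x_mul_first, hc.y_pow_mul_eq_zero (Nat.zero_le r) (by omega)]
    simp

theorem y_mul_top (hc : IsSylvesterChain x y r u) (l : ℕ) : y * (y ^ l * u (r - l)) = 0 := by
  rw [← mul_assoc, ← pow_succ', hc.y_pow_mul_eq_zero (Nat.sub_le r l) (by omega)]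

variable {A : Type*} [CommRing A] [Algebra A B]

theorem eq_zero_of_sum_smul_eq_zero (hc : IsSylvesterChain x y r u)
    (htop : ∀ c : A, c • (y ^ r * u 0) = 0 → c = 0) {l : ℕ} {c : ℕ → A}
    (hsum : ∑ j ∈ Finset.range (r + 1), c j • (y ^ l * u j) = 0) {j : ℕ} (hjl : j + l ≤ r) :
    c j = 0 := by
  apply htop
  have hother : ∀ i ≤ r, i ≠ j → x ^ j * y ^ (r - l - j) * (y ^ l * u i) = 0 := by
    intro i hi hij
    rcases lt_or_gt_of_ne hij with h | h
    · linear_combination y ^ (r - l - j) * y ^ l * hc.x_pow_mul_eq_zero hi h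
    · linear_combination x ^ j * hc.y_pow_mul_eq_zero (b := r - l - j + l) hi (by omega)
  have hself : x ^ j * y ^ (r - l - j) * (y ^ l * u j) = y ^ r * u 0 := by
    have hr : y ^ r = y ^ (r - l - j) * y ^ l * y ^ j := by
      rw [← pow_add, ← pow_add]; congr 1; omega
    have h := hc.x_pow_mul (by omega : j ≤ r) le_rfl
    rw [Nat.sub_self] at h
    rw [hr]
    linear_combination y ^ (r - l - j) * y ^ l * h
  have := congrArg (x ^ j * y ^ (r - l - j) * ·) hsum
  simp only [Finset.mul_sum, mul_smul_comm, mul_zero] at this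
  rwa [Finset.sum_eq_single j (fun i hi hij => by
      rw [hother i (by simpa [Nat.lt_succ_iff] using hi) hij, smul_zero])
    (fun h => absurd (Finset.mem_range.mpr (by omega)) h), hself] at this

theorem x_mul_mem_chainSpan (hc : IsSylvesterChain x y r u) {l : ℕ} {v : B}
    (hv : v ∈ chainSpan A y r u l) : x * v ∈ chainSpan A y r u (l + 1) := by
  obtain ⟨c, rfl⟩ := (Submodule.mem_span_image_finset_iff_exists_fun' A).mp hv
  rw [Finset.mul_sum]
  refine Submodule.sum_mem _ fun j hj => ?_
  rw [mul_smul_comm]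
  refine Submodule.smul_mem _ _ ?_
  rcases j with _ | i
  · rw [mul_left_comm, hc.x_mul_first, mul_zero]
    exact Submodule.zero_mem _
  · rw [mul_left_comm, hc.x_mul_succ i (by simpa using hj), ← mul_assoc, ← pow_succ]
    exact Submodule.subset_span ⟨i, by simp at hj ⊢; omega, rfl⟩

theorem exists_eq_smul_of_y_mul_eq_zero (hc : IsSylvesterChain x y r u)
    (htop : ∀ c : A, c • (y ^ r * u 0) = 0 → c = 0) {l : ℕ} {v : B}
    (hv : v ∈ chainSpan A y r u l) (hyv : y * v = 0) :
    ∃ g : A, v = g • (y ^ l * u (r - l)) := by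
  obtain ⟨c, rfl⟩ := (Submodule.mem_span_image_finset_iff_exists_fun' A).mp hv
  have hsum : ∑ j ∈ Finset.range (r + 1), c j • (y ^ (l + 1) * u j) = 0 := by
    rw [← hyv, Finset.mul_sum]
    refine Finset.sum_congr rfl fun j _ => ?_
    rw [mul_smul_comm, pow_succ']
    ring_nf
  refine ⟨c (r - l), Finset.sum_eq_single (r - l) (fun j hj hjl => ?_) (by simp)⟩
  rw [Finset.mem_range] at hj
  rcases le_or_gt (j + (l + 1)) r with h | h
  · rw [hc.eq_zero_of_sum_smul_eq_zero htop hsum h, zero_smul]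
  · rw [hc.y_pow_mul_eq_zero (by omega) (by omega), smul_zero]

theorem mem_chainSpan_of_mul_mem (hc : IsSylvesterChain x y r u)
    (htop : ∀ c : A, c • (y ^ r * u 0) = 0 → c = 0)
    (hsocle : ∀ v, x * v = 0 → y * v = 0 → ∃ c : A, v = c • (y ^ r * u 0))
    {D : ℕ → Submodule A B} (hyD : ∀ {n v}, v ∈ D n → y * v ∈ D (n + 1))
    (hD : ∀ {m n v}, v ∈ D m → v ∈ D n → m ≠ n → v = 0) {ν : ℕ} (hu : ∀ j ≤ r, u j ∈ D ν)
    {l : ℕ} {v : B} (hv : v ∈ D (ν + l)) (hx : x * v ∈ chainSpan A y r u (l + 1))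
    (hy : y * v ∈ chainSpan A y r u (l + 1)) : v ∈ chainSpan A y r u l := by
  -- subtract `w₁` to make `y` kill `v`, then `w₂` to make `x` kill it too
  obtain ⟨e, he⟩ := (Submodule.mem_span_image_finset_iff_exists_fun' A).mp hy
  set w₁ := ∑ j ∈ Finset.range (r + 1), e j • (y ^ l * u j)
  have hw₁ : w₁ ∈ chainSpan A y r u l :=
    (Submodule.mem_span_image_finset_iff_exists_fun' A).mpr ⟨e, rfl⟩
  have hyw₁ : y * (v - w₁) = 0 := by
    simp only [w₁, mul_sub, ← he, Finset.mul_sum, mul_smul_comm, pow_succ', mul_assoc, sub_self]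
  obtain ⟨g, hg⟩ := hc.exists_eq_smul_of_y_mul_eq_zero htop (v := x * (v - w₁))
    (by rw [mul_sub]; exact sub_mem hx (hc.x_mul_mem_chainSpan hw₁))
    (by rw [mul_left_comm, hyw₁, mul_zero])
  set w₂ := g • (y ^ l * u (r - l))
  have hw₂ : w₂ ∈ chainSpan A y r u l :=
    Submodule.smul_mem _ _ (Submodule.subset_span ⟨r - l, by simp, rfl⟩)
  obtain ⟨c, hcv⟩ := hsocle (v - w₁ - w₂)
    (by rw [mul_sub, hg, mul_smul_comm, hc.x_mul_top, sub_self])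
    (by rw [mul_sub, hyw₁, mul_smul_comm, hc.y_mul_top, smul_zero, sub_zero])
  have hτ : y ^ r * u 0 ∈ chainSpan A y r u r := Submodule.subset_span ⟨0, by simp, rfl⟩
  rw [show v = w₁ + w₂ + c • (y ^ r * u 0) by rw [← hcv]; abel]
  refine add_mem (add_mem hw₁ hw₂) ?_
  rcases eq_or_ne l r with rfl | hlr
  · exact Submodule.smul_mem _ _ hτ
  · have hle := chainSpan_le (fun hv => hyD hv) hu
    rw [hD (hcv ▸ sub_mem (sub_mem hv (hle l hw₁)) (hle l hw₂))
      (Submodule.smul_mem _ c (hle r hτ)) (by omega)]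
    exact Submodule.zero_mem _

theorem mem_chainSpan_of_monomial_mul_eq_zero (hc : IsSylvesterChain x y r u)
    (htop : ∀ c : A, c • (y ^ r * u 0) = 0 → c = 0)
    (hsocle : ∀ v, x * v = 0 → y * v = 0 → ∃ c : A, v = c • (y ^ r * u 0))
    {D : ℕ → Submodule A B} (hxD : ∀ {n v}, v ∈ D n → x * v ∈ D (n + 1))
    (hyD : ∀ {n v}, v ∈ D n → y * v ∈ D (n + 1))
    (hD : ∀ {m n v}, v ∈ D m → v ∈ D n → m ≠ n → v = 0) {ν : ℕ} (hu : ∀ j ≤ r, u j ∈ D ν)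
    (k : ℕ) {l : ℕ} {v : B} (hv : v ∈ D (ν + l))
    (hk : ∀ a b, a + b = k → x ^ a * y ^ b * v = 0) : v ∈ chainSpan A y r u l := by
  induction k generalizing l v with
  | zero =>
    rw [show v = 0 by simpa using hk 0 0 rfl]
    exact Submodule.zero_mem _
  | succ k ih =>
    refine hc.mem_chainSpan_of_mul_mem htop hsocle (D := D) hyD hD hu hv
      (ih (hxD hv) fun a b hab => ?_) (ih (hyD hv) fun a b hab => ?_)
    · rw [← hk (a + 1) b (by omega)]; ring
    · rw [← hk a (b + 1) (by omega)]; ring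

end IsSylvesterChain

section

variable {A : Type*} [CommRing A] {d1 d2 β1 β2 : ℕ} {f1 f2 s s' : MvPolynomial (Fin 2) A}

theorem isSylv.isHomogeneous (h : isSylv d1 d2 β1 β2 f1 f2 s) (hβ1 : β1 < d1) (hβ2 : β2 < d1)
    (hd : d1 ≤ d2) {n : ℕ} (hn : n + β1 + β2 + 2 = d1 + d2) : s.IsHomogeneous n := by
  obtain ⟨a11, a12, a21, a22, h11, h12, h21, h22, -, -, rfl⟩ := h
  have e₁ : d1 - β1 - 1 + (d2 - β2 - 1) = n := by omega
  have e₂ : d1 - β2 - 1 + (d2 - β1 - 1) = n := by omega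
  exact (e₁ ▸ h11.mul h22).sub (e₂ ▸ h12.mul h21)

theorem isSylv.X_zero_pow_mul_mem (h : isSylv d1 d2 β1 β2 f1 f2 s) :
    X 0 ^ (β1 + 1) * s ∈ Ideal.span {f1, f2} := by
  obtain ⟨a11, a12, a21, a22, -, -, -, -, h1, h2, rfl⟩ := h
  exact X_zero_pow_mul_det_mem h1 h2

theorem isSylv.X_one_pow_mul_mem (h : isSylv d1 d2 β1 β2 f1 f2 s) :
    X 1 ^ (β2 + 1) * s ∈ Ideal.span {f1, f2} := by
  obtain ⟨a11, a12, a21, a22, -, -, -, -, h1, h2, rfl⟩ := h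
  exact X_one_pow_mul_det_mem h1 h2

theorem isSylv.X_zero_mul_sub_X_one_mul_mem (h : isSylv d1 d2 (β1 + 1) β2 f1 f2 s)
    (h' : isSylv d1 d2 β1 (β2 + 1) f1 f2 s') : X 0 * s - X 1 * s' ∈ Ideal.span {f1, f2} := by
  obtain ⟨a11, a12, a21, a22, -, -, -, -, h1, h2, rfl⟩ := h
  obtain ⟨b11, b12, b21, b22, -, -, -, -, h1', h2', rfl⟩ := h'
  convert det_sub_det_mem (f₁ := f1) (f₂ := f2) (p := β1 + 1) (q := β2 + 1)
    (a₁₁ := X 0 * a11) (a₁₂ := a12) (a₂₁ := X 0 * a21) (a₂₂ := a22) (b₁₁ := b11)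
    (b₁₂ := X 1 * b12) (b₂₁ := b21) (b₂₂ := X 1 * b22) (by rw [h1]; ring) (by rw [h2]; ring)
    (by rw [h1']; ring) (by rw [h2']; ring) using 1
  ring

theorem isSylv.exists_eq_smul_of_X_mul_eq_zero
    (hreg : IsWeaklyRegular (MvPolynomial (Fin 2) A) [f1, f2]) (h : isSylv d1 d2 0 β2 f1 f2 s)
    {v : MvPolynomial (Fin 2) A ⧸ Ideal.span {f1, f2}} (hx : Ideal.Quotient.mk _ (X 0) * v = 0)
    (hy : Ideal.Quotient.mk _ (X 1) * v = 0) :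
    ∃ c : A, v = c • (Ideal.Quotient.mk _ (X 1) ^ β2 * Ideal.Quotient.mk _ s) := by
  obtain ⟨a11, a12, a21, a22, -, -, -, -, h1, h2, rfl⟩ := h
  obtain ⟨H, rfl⟩ := Ideal.Quotient.mk_surjective v
  rw [← map_mul, Ideal.Quotient.eq_zero_iff_mem] at hx hy
  obtain ⟨c, hc⟩ := exists_sub_C_mul_det_mem hreg (b₁₁ := a11) (b₁₂ := X 1 ^ β2 * a12)
    (b₂₁ := a21) (b₂₂ := X 1 ^ β2 * a22) (by rw [h1]; ring) (by rw [h2]; ring) hx hy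
  refine ⟨c, ?_⟩
  rw [← map_pow, ← map_mul, ← Ideal.Quotient.mk_C_mul, Ideal.Quotient.eq]
  convert hc using 3
  ring

theorem isSylv.eq_zero_of_smul_eq_zero
    (hreg : IsWeaklyRegular (MvPolynomial (Fin 2) A) [f1, f2]) (h : isSylv d1 d2 0 β2 f1 f2 s)
    (hβ2 : β2 < d1) {c : A}
    (hc : c • (Ideal.Quotient.mk (Ideal.span {f1, f2}) (X 1) ^ β2 * Ideal.Quotient.mk _ s) = 0) :
    c = 0 := by
  obtain ⟨a11, a12, a21, a22, h11, h12, -, -, h1, h2, rfl⟩ := h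
  have e : β2 + (d1 - β2 - 1) = d1 - 1 := by omega
  refine eq_zero_of_C_mul_det_mem hreg (b₁₁ := a11) (b₁₂ := X 1 ^ β2 * a12) (b₂₁ := a21)
    (b₂₂ := X 1 ^ β2 * a22) (by simpa using h11) (e ▸ (isHomogeneous_X_pow 1 β2).mul h12)
    (by rw [h1]; ring) (by rw [h2]; ring) ?_
  rw [← Ideal.Quotient.eq_zero_iff_mem, Ideal.Quotient.mk_C_mul, ← hc, ← map_pow, ← map_mul]
  ring_nf

theorem isSylvesterChain_mk {r : ℕ} {s : ℕ → MvPolynomial (Fin 2) A}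
    (hs : ∀ j ≤ r, isSylv d1 d2 j (r - j) f1 f2 (s j)) :
    IsSylvesterChain (Ideal.Quotient.mk (Ideal.span {f1, f2}) (X 0))
      (Ideal.Quotient.mk _ (X 1)) r (fun j => Ideal.Quotient.mk _ (s j)) where
  x_mul_first := by
    rw [← map_mul, Ideal.Quotient.eq_zero_iff_mem]
    simpa using (hs 0 (Nat.zero_le r)).X_zero_pow_mul_mem
  y_mul_last := by
    rw [← map_mul, Ideal.Quotient.eq_zero_iff_mem]
    simpa using (hs r le_rfl).X_one_pow_mul_mem
  x_mul_succ j hj := by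
    rw [← map_mul, ← map_mul, Ideal.Quotient.eq]
    exact (hs (j + 1) hj).X_zero_mul_sub_X_one_mul_mem
      ((show r - j = r - (j + 1) + 1 by omega) ▸ hs j hj.le)

end

theorem stmt16_general {A : Type*} [CommRing A] (d1 d2 ν : ℕ)
    (hd1 : 1 ≤ d1) (hd12 : d1 ≤ d2)
    (hν1 : d2 - 1 ≤ ν) (hν2 : ν ≤ d1 + d2 - 2)
    (f1 f2 : MvPolynomial (Fin 2) A)
    (hf1 : f1.IsHomogeneous d1) (hf2 : f2.IsHomogeneous d2)
    (hreg : RingTheory.Sequence.IsRegular (MvPolynomial (Fin 2) A) [f1, f2])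
    (s : ℕ → MvPolynomial (Fin 2) A)
    (hs : ∀ α1 ≤ d1 + d2 - 2 - ν,
      isSylv d1 d2 α1 (d1 + d2 - 2 - ν - α1) f1 f2 (s α1)) :
    -- linear independence modulo `(f1, f2)`
    (∀ c : ℕ → A,
      (∑ α1 ∈ Finset.range (d1 + d2 - 2 - ν + 1), C (c α1) * s α1) ∈
        Ideal.span {f1, f2} →
      ∀ α1 ≤ d1 + d2 - 2 - ν, c α1 = 0) ∧
    -- spanning: every inertia form of degree `ν` is a combination of the `s α1`
    (∀ G : MvPolynomial (Fin 2) A, G.IsHomogeneous ν →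
      (∃ k : ℕ, ∀ g ∈ (Ideal.span {(X 0 : MvPolynomial (Fin 2) A), X 1}) ^ k,
        g * G ∈ Ideal.span {f1, f2}) →
      ∃ c : ℕ → A,
        G - ∑ α1 ∈ Finset.range (d1 + d2 - 2 - ν + 1), C (c α1) * s α1 ∈
          Ideal.span {f1, f2}) := by
  set r := d1 + d2 - 2 - ν
  set I := Ideal.span {f1, f2}
  have hchain := isSylvesterChain_mk hs
  have htop : ∀ c : A, c • (Ideal.Quotient.mk I (X 1) ^ r * Ideal.Quotient.mk I (s 0)) = 0 →
      c = 0 := fun c =>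
    (hs 0 (Nat.zero_le r)).eq_zero_of_smul_eq_zero hreg.toIsWeaklyRegular (by omega)
  have hmk (c : ℕ → A) : Ideal.Quotient.mk I (∑ j ∈ Finset.range (r + 1), C (c j) * s j) =
      ∑ j ∈ Finset.range (r + 1),
        c j • (Ideal.Quotient.mk I (X 1) ^ 0 * Ideal.Quotient.mk I (s j)) := by
    simp [Ideal.Quotient.mk_C_mul]
  refine ⟨fun c hc j hj => hchain.eq_zero_of_sum_smul_eq_zero htop (l := 0) ?_ (by omega), ?_⟩
  · rwa [← hmk, Ideal.Quotient.eq_zero_iff_mem]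
  rintro G hG ⟨k, hk⟩
  have hI : ∀ p ∈ I, ∀ n, homogeneousComponent n p ∈ I := fun p hp =>
    homogeneousComponent_mem_span (by rintro _ (rfl | rfl); exacts [⟨d1, hf1⟩, ⟨d2, hf2⟩]) hp
  obtain ⟨c, hc⟩ := (Submodule.mem_span_image_finset_iff_exists_fun' A).mp <|
    hchain.mem_chainSpan_of_monomial_mul_eq_zero htop (D := quotHomogeneousSubmodule I)
      (fun v => (hs 0 (Nat.zero_le r)).exists_eq_smul_of_X_mul_eq_zero hreg.toIsWeaklyRegular)
      (mk_mul_mem_quotHomogeneousSubmodule (isHomogeneous_X A 0))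
      (mk_mul_mem_quotHomogeneousSubmodule (isHomogeneous_X A 1))
      (eq_zero_of_mem_quotHomogeneousSubmodule hI)
      (fun j hj => mk_mem_quotHomogeneousSubmodule <|
        (hs j hj).isHomogeneous (n := ν) (by omega) (by omega) hd12 (by omega))
      k (l := 0) (mk_mem_quotHomogeneousSubmodule hG) fun _ _ => mk_X_pow_mul_X_pow_mul_eq_zero hk
  exact ⟨c, Ideal.Quotient.eq.mp (by rw [hmk, hc])⟩

/-- Let `f1, f2` be homogeneous of degrees `d1 ≤ d2` in `A[X1,X2]`
forming a regular sequence, `δ = d1+d2−2`, and assume `d2 − 1 ≤ ν ≤ δ` (so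
`0 ≤ δ − ν ≤ d1 − 1`).  Then the Sylvester forms `(sylv_α(f1,f2))_{|α| = δ−ν}` form an
`A`-basis of `H^0_m(B)_ν`: they are linearly independent over `A` modulo `(f1,f2)`,
and every inertia form of degree `ν` is, modulo `(f1,f2)`, an `A`-linear combination of
them.  (Here `α = (α1, δ−ν−α1)` for `0 ≤ α1 ≤ δ−ν`, and `s α1` denotes a chosen
representative of `sylv_α(f1,f2)`.) -/
theorem stmt16 {A : Type*} [CommRing A] [Nontrivial A] (d1 d2 ν : ℕ)
    (hd1 : 1 ≤ d1) (hd12 : d1 ≤ d2)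
    (hν1 : d2 - 1 ≤ ν) (hν2 : ν ≤ d1 + d2 - 2)
    (f1 f2 : MvPolynomial (Fin 2) A)
    (hf1 : f1.IsHomogeneous d1) (hf2 : f2.IsHomogeneous d2)
    (hreg : RingTheory.Sequence.IsRegular (MvPolynomial (Fin 2) A) [f1, f2])
    (s : ℕ → MvPolynomial (Fin 2) A)
    (hs : ∀ α1 ≤ d1 + d2 - 2 - ν,
      isSylv d1 d2 α1 (d1 + d2 - 2 - ν - α1) f1 f2 (s α1)) :
    -- linear independence modulo `(f1, f2)`
    (∀ c : ℕ → A,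
      (∑ α1 ∈ Finset.range (d1 + d2 - 2 - ν + 1), C (c α1) * s α1) ∈
        Ideal.span {f1, f2} →
      ∀ α1 ≤ d1 + d2 - 2 - ν, c α1 = 0) ∧
    -- spanning: every inertia form of degree `ν` is a combination of the `s α1`
    (∀ G : MvPolynomial (Fin 2) A, G.IsHomogeneous ν →
      (∃ k : ℕ, ∀ g ∈ (Ideal.span {(X 0 : MvPolynomial (Fin 2) A), X 1}) ^ k,
        g * G ∈ Ideal.span {f1, f2}) →
      ∃ c : ℕ → A,
        G - ∑ α1 ∈ Finset.range (d1 + d2 - 2 - ν + 1), C (c α1) * s α1 ∈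
          Ideal.span {f1, f2}) :=
  stmt16_general d1 d2 ν hd1 hd12 hν1 hν2 f1 f2 hf1 hf2 hreg s hs
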